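/- Let V be a 2-dimensional complex vector space with symplectic form ε, and let G : S⁴V × S⁴V × S⁴V → ℂ be the trilinear form obtained by symmetrizing the contraction with six copies of ε as G_{aep} = S_{(ABCD)}S_{(EFGH)}(ε_{AE}ε_{BF}ε_{GP}ε_{HQ}ε_{CR}ε_{DS}), and g the induced metric on S⁴V from four copies of ε. Then G is totally symmetric and trace-free with respect to g: G_{abc} = G_{(abc)} and g^{ab}G_{abc} = 0. -/
import Mathlib


noncomputable section

open Matrix

/-- The spinor symplectic form `ε` on the 2-dimensional space `V = ℂ²`. -/
def eps : Matrix (Fin 2) (Fin 2) ℂ := !![0, 1; -1, 0]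

/-- An index of `S⁴V` is a (symmetrized) block of four spinor indices. -/
abbrev Idx := Fin 4 → Fin 2

/-- The induced metric on `S⁴V`:
`g_{ae} = S_{(ABCD)}(ε_{AE}ε_{BF}ε_{CG}ε_{DH})`. -/
def gS (a e : Idx) : ℂ :=
  (1 / 24) * ∑ σ : Equiv.Perm (Fin 4), ∏ i : Fin 4, eps (a (σ i)) (e i)

/-- The cubic form
`G_{aep} = S_{(ABCD)}S_{(EFGH)}(ε_{AE}ε_{BF}ε_{GP}ε_{HQ}ε_{CR}ε_{DS})`,
viewed as a tensor on `S⁴V` (so symmetrized over each four-index block). -/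
def GS (a e p : Idx) : ℂ :=
  (1 / 24) ^ 3 * ∑ σ : Equiv.Perm (Fin 4), ∑ τ : Equiv.Perm (Fin 4),
    ∑ ω : Equiv.Perm (Fin 4),
    eps (a (σ 0)) (e (τ 0)) * eps (a (σ 1)) (e (τ 1)) *
    eps (e (τ 2)) (p (ω 0)) * eps (e (τ 3)) (p (ω 1)) *
    eps (a (σ 2)) (p (ω 2)) * eps (a (σ 3)) (p (ω 3))

/-- A basis of the 5-dimensional space `S⁴V` indexed by `Fin 5`. -/
def tup (m : Fin 5) : Idx := fun i => if (i : ℕ) < (m : ℕ) then 1 else 0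

/-- Components of `g` in the `Fin 5` basis of `S⁴V`. -/
def g5 : Matrix (Fin 5) (Fin 5) ℂ := fun m n => gS (tup m) (tup n)

/-- Components of `G` in the `Fin 5` basis of `S⁴V`. -/
def G5 (m n p : Fin 5) : ℂ := GS (tup m) (tup n) (tup p)

/-! ### Auxiliary integer-valued versions -/

def epsZ : Matrix (Fin 2) (Fin 2) ℤ := !![0, 1; -1, 0]

lemma epsC (x y : Fin 2) : ((epsZ x y : ℤ) : ℂ) = eps x y := by
  fin_cases x <;> fin_cases y <;>
    norm_num [eps, epsZ, Matrix.cons_val_zero, Matrix.cons_val_one, Matrix.head_cons]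

def gSz (a e : Idx) : ℤ :=
  ∑ σ : Equiv.Perm (Fin 4), ∏ i : Fin 4, epsZ (a (σ i)) (e i)

def GSz (a e p : Idx) : ℤ :=
  ∑ σ : Equiv.Perm (Fin 4), ∑ τ : Equiv.Perm (Fin 4),
    ∑ ω : Equiv.Perm (Fin 4),
    epsZ (a (σ 0)) (e (τ 0)) * epsZ (a (σ 1)) (e (τ 1)) *
    epsZ (e (τ 2)) (p (ω 0)) * epsZ (e (τ 3)) (p (ω 1)) *
    epsZ (a (σ 2)) (p (ω 2)) * epsZ (a (σ 3)) (p (ω 3))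

lemma gS_cast (a e : Idx) : gS a e = (1 / 24 : ℂ) * ((gSz a e : ℤ) : ℂ) := by
  simp only [gS, gSz, Int.cast_sum, Int.cast_prod, epsC]

lemma GS_cast (a e p : Idx) :
    GS a e p = ((1 : ℂ) / 24) ^ 3 * ((GSz a e p : ℤ) : ℂ) := by
  simp only [GS, GSz, Int.cast_sum, Int.cast_mul, epsC]

/-! ### Symmetry of `G` -/

def term (a e p : Idx) (σ τ ω : Equiv.Perm (Fin 4)) : ℂ :=
  eps (a (σ 0)) (e (τ 0)) * eps (a (σ 1)) (e (τ 1)) *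
  eps (e (τ 2)) (p (ω 0)) * eps (e (τ 3)) (p (ω 1)) *
  eps (a (σ 2)) (p (ω 2)) * eps (a (σ 3)) (p (ω 3))

lemma GS_eq (a e p : Idx) :
    GS a e p = (1 / 24 : ℂ) ^ 3 * ∑ σ : Equiv.Perm (Fin 4),
      ∑ τ : Equiv.Perm (Fin 4), ∑ ω : Equiv.Perm (Fin 4), term a e p σ τ ω := rfl

/-- The permutation exchanging the first and second pairs of indices. -/
def cperm : Equiv.Perm (Fin 4) :=
  ⟨![2, 3, 0, 1], ![2, 3, 0, 1], by decide, by decide⟩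

lemma cperm0 : cperm 0 = 2 := rfl
lemma cperm1 : cperm 1 = 3 := rfl
lemma cperm2 : cperm 2 = 0 := rfl
lemma cperm3 : cperm 3 = 1 := rfl

lemma eps_anti (x y : Fin 2) : eps x y = - eps y x := by
  fin_cases x <;> fin_cases y <;>
    norm_num [eps, Matrix.cons_val_zero, Matrix.cons_val_one, Matrix.head_cons]

lemma key1 (a e p : Idx) (σ τ ω : Equiv.Perm (Fin 4)) :
    term e a p σ τ ω = term a e p τ σ (ω * cperm) := by
  simp only [term, Equiv.Perm.mul_apply, cperm0, cperm1, cperm2, cperm3]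
  rw [eps_anti (e (σ 0)) (a (τ 0)), eps_anti (e (σ 1)) (a (τ 1))]
  ring

lemma key2 (a e p : Idx) (σ τ ω : Equiv.Perm (Fin 4)) :
    term a p e σ τ ω = term a e p (σ * cperm) (ω * cperm) (τ * cperm) := by
  simp only [term, Equiv.Perm.mul_apply, cperm0, cperm1, cperm2, cperm3]
  rw [eps_anti (p (τ 2)) (e (ω 0)), eps_anti (p (τ 3)) (e (ω 1))]
  ring

lemma sum_reindex (f : Equiv.Perm (Fin 4) → ℂ) :
    ∑ ω : Equiv.Perm (Fin 4), f (ω * cperm) = ∑ ω : Equiv.Perm (Fin 4), f ω :=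
  Equiv.sum_comp (Equiv.mulRight cperm) f

lemma GS_swap12 (a e p : Idx) : GS e a p = GS a e p := by
  rw [GS_eq, GS_eq]
  congr 1
  calc ∑ σ : Equiv.Perm (Fin 4), ∑ τ : Equiv.Perm (Fin 4), ∑ ω : Equiv.Perm (Fin 4),
        term e a p σ τ ω
      = ∑ σ : Equiv.Perm (Fin 4), ∑ τ : Equiv.Perm (Fin 4), ∑ ω : Equiv.Perm (Fin 4),
        term a e p τ σ (ω * cperm) := by
        exact Finset.sum_congr rfl fun σ _ => Finset.sum_congr rfl fun τ _ =>
          Finset.sum_congr rfl fun ω _ => key1 a e p σ τ ω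
    _ = ∑ σ : Equiv.Perm (Fin 4), ∑ τ : Equiv.Perm (Fin 4), ∑ ω : Equiv.Perm (Fin 4),
        term a e p τ σ ω := by
        exact Finset.sum_congr rfl fun σ _ => Finset.sum_congr rfl fun τ _ =>
          sum_reindex _
    _ = _ := Finset.sum_comm

lemma GS_swap23 (a e p : Idx) : GS a p e = GS a e p := by
  rw [GS_eq, GS_eq]
  congr 1
  calc ∑ σ : Equiv.Perm (Fin 4), ∑ τ : Equiv.Perm (Fin 4), ∑ ω : Equiv.Perm (Fin 4),
        term a p e σ τ ω
      = ∑ σ : Equiv.Perm (Fin 4), ∑ τ : Equiv.Perm (Fin 4), ∑ ω : Equiv.Perm (Fin 4),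
        term a e p (σ * cperm) (ω * cperm) (τ * cperm) := by
        exact Finset.sum_congr rfl fun σ _ => Finset.sum_congr rfl fun τ _ =>
          Finset.sum_congr rfl fun ω _ => key2 a e p σ τ ω
    _ = ∑ σ : Equiv.Perm (Fin 4), ∑ τ : Equiv.Perm (Fin 4), ∑ ω : Equiv.Perm (Fin 4),
        term a e p σ (ω * cperm) (τ * cperm) := by
        exact sum_reindex fun σ => ∑ τ : Equiv.Perm (Fin 4), ∑ ω : Equiv.Perm (Fin 4),
          term a e p σ (ω * cperm) (τ * cperm)
    _ = ∑ σ : Equiv.Perm (Fin 4), ∑ τ : Equiv.Perm (Fin 4), ∑ ω : Equiv.Perm (Fin 4),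
        term a e p σ (τ * cperm) (ω * cperm) := by
        exact Finset.sum_congr rfl fun σ _ => Finset.sum_comm
    _ = ∑ σ : Equiv.Perm (Fin 4), ∑ τ : Equiv.Perm (Fin 4), ∑ ω : Equiv.Perm (Fin 4),
        term a e p σ (τ * cperm) ω := by
        exact Finset.sum_congr rfl fun σ _ => Finset.sum_congr rfl fun τ _ =>
          sum_reindex _
    _ = _ := Finset.sum_congr rfl fun σ _ =>
          sum_reindex fun τ => ∑ ω : Equiv.Perm (Fin 4), term a e p σ τ ω

/-! ### The metric in the `Fin 5` basis and its inverse -/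

def gzf : Fin 5 → Fin 5 → ℤ := fun m n =>
  if (m : ℕ) + (n : ℕ) = 4 then
    (if (m : ℕ) = 0 ∨ (m : ℕ) = 4 then 24 else if (m : ℕ) = 2 then 4 else -6)
  else 0

lemma gz_all : ∀ m n : Fin 5, gSz (tup m) (tup n) = gzf m n := by decide

lemma g5val (m n : Fin 5) : g5 m n = (1 / 24 : ℂ) * ((gzf m n : ℤ) : ℂ) := by
  rw [show g5 m n = gS (tup m) (tup n) from rfl, gS_cast, gz_all]

def bint : Fin 5 → Fin 5 → ℤ := fun m n =>
  if (m : ℕ) + (n : ℕ) = 4 then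
    (if (m : ℕ) = 0 ∨ (m : ℕ) = 4 then 1 else if (m : ℕ) = 2 then 6 else -4)
  else 0

def Binv : Matrix (Fin 5) (Fin 5) ℂ := fun m n => ((bint m n : ℤ) : ℂ)

lemma fv0 : ((0 : Fin 5) : ℕ) = 0 := rfl
lemma fv1 : ((1 : Fin 5) : ℕ) = 1 := rfl
lemma fv2 : ((2 : Fin 5) : ℕ) = 2 := rfl
lemma fv3 : ((3 : Fin 5) : ℕ) = 3 := rfl
lemma fv4 : ((4 : Fin 5) : ℕ) = 4 := rfl

lemma g5_mul_Binv : g5 * Binv = 1 := by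
  ext i j
  rw [Matrix.mul_apply, Fin.sum_univ_five]
  simp only [g5val, Binv]
  fin_cases i <;> fin_cases j <;>
    norm_num [gzf, bint, Matrix.one_apply, Fin.ext_iff, fv0, fv1, fv2, fv3, fv4]

/-! ### Values of `G` needed for the trace -/

set_option maxHeartbeats 4000000 in
set_option maxRecDepth 100000 in
lemma keyz0 : 2 * GSz (tup 0) (tup 4) (tup 0) - 8 * GSz (tup 1) (tup 3) (tup 0)
      + 6 * GSz (tup 2) (tup 2) (tup 0) = 0 := by decide

set_option maxHeartbeats 4000000 in
set_option maxRecDepth 100000 in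
lemma keyz1 : 2 * GSz (tup 0) (tup 4) (tup 1) - 8 * GSz (tup 1) (tup 3) (tup 1)
      + 6 * GSz (tup 2) (tup 2) (tup 1) = 0 := by decide

set_option maxHeartbeats 4000000 in
set_option maxRecDepth 100000 in
lemma keyz2 : 2 * GSz (tup 0) (tup 4) (tup 2) - 8 * GSz (tup 1) (tup 3) (tup 2)
      + 6 * GSz (tup 2) (tup 2) (tup 2) = 0 := by decide

set_option maxHeartbeats 4000000 in
set_option maxRecDepth 100000 in
lemma keyz3 : 2 * GSz (tup 0) (tup 4) (tup 3) - 8 * GSz (tup 1) (tup 3) (tup 3)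
      + 6 * GSz (tup 2) (tup 2) (tup 3) = 0 := by decide

set_option maxHeartbeats 4000000 in
set_option maxRecDepth 100000 in
lemma keyz4 : 2 * GSz (tup 0) (tup 4) (tup 4) - 8 * GSz (tup 1) (tup 3) (tup 4)
      + 6 * GSz (tup 2) (tup 2) (tup 4) = 0 := by decide

lemma keyz : ∀ c : Fin 5,
    2 * GSz (tup 0) (tup 4) (tup c) - 8 * GSz (tup 1) (tup 3) (tup c)
      + 6 * GSz (tup 2) (tup 2) (tup c) = 0 := by
  intro c
  fin_cases c
  · exact keyz0
  · exact keyz1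
  · exact keyz2
  · exact keyz3
  · exact keyz4

lemma G5val (m n p : Fin 5) :
    G5 m n p = ((1 : ℂ) / 24) ^ 3 * ((GSz (tup m) (tup n) (tup p) : ℤ) : ℂ) :=
  GS_cast _ _ _

lemma G5symm (m n p : Fin 5) : G5 m n p = G5 n m p :=
  GS_swap12 (tup n) (tup m) (tup p)

/-- `G` is totally symmetric and trace-free with respect to `g`:
`G_{abc} = G_{(abc)}` and `g^{ab}G_{abc} = 0`. -/
theorem GS_symmetric_and_tracefree :
    (∀ a e p : Idx, GS a e p = GS e a p) ∧
    (∀ a e p : Idx, GS a e p = GS a p e) ∧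
    (∀ c : Fin 5, ∑ a : Fin 5, ∑ b : Fin 5, (g5⁻¹) a b * G5 a b c = 0) := by
  refine ⟨fun a e p => (GS_swap12 a e p).symm,
    fun a e p => (GS_swap23 a e p).symm, fun c => ?_⟩
  rw [Matrix.inv_eq_right_inv g5_mul_Binv]
  simp only [Fin.sum_univ_five, Binv]
  rw [G5symm 3 1 c, G5symm 4 0 c]
  simp only [G5val]
  have hC : ((2 * GSz (tup 0) (tup 4) (tup c) - 8 * GSz (tup 1) (tup 3) (tup c)
      + 6 * GSz (tup 2) (tup 2) (tup c) : ℤ) : ℂ) = 0 := by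
    rw [keyz c]; norm_num
  push_cast at hC
  norm_num [bint, fv0, fv1, fv2, fv3, fv4]
  linear_combination ((1 : ℂ) / 24) ^ 3 * hC
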